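/- Let B be a real symmetric positive definite 3×3 matrix. Then for every nonzero real symmetric 3×3 matrix M, M:ℂ(B):M > 0; consequently the linear map M ↦ ℂ(B):M on the space of real symmetric 3×3 matrices is injective (hence invertible). -/

import Mathlib

open Matrix MeasureTheory

noncomputable section

/-- 3×3 real matrices. -/
abbrev Mat3 := Matrix (Fin 3) (Fin 3) ℝ

/-- Rank-4 tensors on ℝ³. -/
abbrev Tens4 := Fin 3 → Fin 3 → Fin 3 → Fin 3 → ℝ

/-- Tensor (outer) product of two matrices: `(K ⊗ L)_{ijkl} = K_{ij} L_{kl}`. -/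
def otimes (K L : Mat3) : Tens4 := fun i j k l => K i j * L k l

/-- Symmetrization of a rank-4 tensor: the average over all 24 permutations of the indices. -/
def symmetrize (T : Tens4) : Tens4 := fun i j k l =>
  (∑ σ : Equiv.Perm (Fin 4),
      T (![i, j, k, l] (σ 0)) (![i, j, k, l] (σ 1)) (![i, j, k, l] (σ 2)) (![i, j, k, l] (σ 3)))
    / 24

/-- Contraction of a rank-4 tensor with a matrix: `(𝔹:M)_{ij} = Σ_{k,l} 𝔹_{ijkl} M_{kl}`. -/
def contr (T : Tens4) (M : Mat3) : Mat3 :=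
  Matrix.of fun i j => ∑ k, ∑ l, T i j k l * M k l

/-- Full contraction `N:𝔹:M = Σ_{i,j,k,l} N_{ij} 𝔹_{ijkl} M_{kl}`. -/
def dcontr (N : Mat3) (T : Tens4) (M : Mat3) : ℝ :=
  ∑ i, ∑ j, ∑ k, ∑ l, N i j * T i j k l * M k l

/-- The matrix `(B + s·I)⁻¹` (matrix inverse). -/
def res (B : Mat3) (s : ℝ) : Mat3 := (B + s • (1 : Mat3))⁻¹

/-- `A(B) = (1/2)·∫₀^∞ (B + s·I)⁻¹ / √(det(B + s·I)) ds`, entrywise. -/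
def Amat (B : Mat3) : Mat3 :=
  Matrix.of fun i j =>
    (1 / 2) * ∫ s in Set.Ioi (0 : ℝ),
      res B s i j / Real.sqrt (B + s • (1 : Mat3)).det

/-- `𝔸(B) = (3/4)·∫₀^∞ s·S((B+sI)⁻¹ ⊗ (B+sI)⁻¹) / √(det(B+sI)) ds`, entrywise. -/
def Atens (B : Mat3) : Tens4 := fun i j k l =>
  (3 / 4) * ∫ s in Set.Ioi (0 : ℝ),
    s * symmetrize (otimes (res B s) (res B s)) i j k l
      / Real.sqrt (B + s • (1 : Mat3)).det

/-- `ℂ(B) = (3/4)·∫₀^∞ S((B+sI)⁻¹ ⊗ (B+sI)⁻¹) / √(det(B+sI)) ds`, entrywise. -/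
def Ctens (B : Mat3) : Tens4 := fun i j k l =>
  (3 / 4) * ∫ s in Set.Ioi (0 : ℝ),
    symmetrize (otimes (res B s) (res B s)) i j k l
      / Real.sqrt (B + s • (1 : Mat3)).det

end

/-!
For a symmetric matrix `R`, `S(R ⊗ R)_{ijkl} = (R_ij R_kl + R_ik R_jl + R_il R_jk) / 3`, hence
`M : S(R ⊗ R) : M = ((tr MR)² + 2 tr((MR)²)) / 3`. If `R = yᵀ y` is positive definite and
`M ≠ 0` is symmetric, then `tr((MR)²) = ‖y M yᵀ‖²` is positive. Taking `R = (B + sI)⁻¹`, the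
integrand of `M : ℂ(B) : M` is therefore positive for every `s > 0`. It is integrable because
the spectral decomposition of `B` bounds it by a multiple of `(s + λ)⁻²`, `λ` the least eigenvalue
of `B`. Injectivity on symmetric matrices follows from `M : ℂ(B) : M = M : (ℂ(B) : M)`.
-/

open Finset

open Equiv in
def permFinFourList : List (Perm (Fin 4)) :=
  [1, swap 0 1, swap 0 2, swap 0 3, swap 1 2, swap 1 3, swap 2 3,
   swap 0 1 * swap 0 2, swap 0 1 * swap 0 3, swap 0 1 * swap 1 2, swap 0 1 * swap 1 3,
   swap 0 1 * swap 2 3, swap 0 2 * swap 0 3, swap 0 2 * swap 1 3, swap 0 2 * swap 2 3,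
   swap 0 3 * swap 1 2, swap 1 2 * swap 1 3, swap 1 2 * swap 2 3,
   swap 0 1 * swap 0 2 * swap 0 3, swap 0 1 * swap 0 2 * swap 1 3,
   swap 0 1 * swap 0 2 * swap 2 3, swap 0 1 * swap 0 3 * swap 1 2,
   swap 0 1 * swap 1 2 * swap 1 3, swap 0 1 * swap 1 2 * swap 2 3]

theorem sum_perm_fin_four {α : Type*} [AddCommMonoid α] (f : Equiv.Perm (Fin 4) → α) :
    ∑ σ, f σ = (permFinFourList.map f).sum := by
  rw [← List.sum_toFinset _ (by decide : permFinFourList.Nodup),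
    (by decide : permFinFourList.toFinset = univ)]

theorem symmetrize_otimes_self {R : Mat3} (hR : R.IsSymm) (i j k l : Fin 3) :
    symmetrize (otimes R R) i j k l
      = (R i j * R k l + R i k * R j l + R i l * R j k) / 3 := by
  rw [symmetrize, sum_perm_fin_four]
  simp +decide only [permFinFourList, List.map_cons, List.map_nil,
    List.sum_cons, List.sum_nil, otimes, Equiv.Perm.one_apply, Equiv.Perm.mul_apply,
    Equiv.swap_apply_def, cons_val_zero, cons_val_one, cons_val_two, cons_val_three, head_cons,
    tail_cons, reduceIte]
  rw [hR.apply i j, hR.apply i k, hR.apply i l, hR.apply j k, hR.apply j l, hR.apply k l]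
  ring

theorem abs_symmetrize_otimes_self_le {R : Mat3} (hR : R.IsSymm) {m : ℝ}
    (hm : ∀ a b, |R a b| ≤ m) (i j k l : Fin 3) :
    |symmetrize (otimes R R) i j k l| ≤ m ^ 2 := by
  have hprod (a b c d : Fin 3) : |R a b * R c d| ≤ m ^ 2 := by
    rw [abs_mul, sq]
    exact mul_le_mul (hm a b) (hm c d) (abs_nonneg _) ((abs_nonneg _).trans (hm a b))
  rw [symmetrize_otimes_self hR, abs_div, abs_of_pos (three_pos : (0 : ℝ) < 3),
    div_le_iff₀ three_pos]
  linarith [abs_add_three (R i j * R k l) (R i k * R j l) (R i l * R j k),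
    hprod i j k l, hprod i k j l, hprod i l j k]

theorem dcontr_symmetrize_otimes_self {R M : Mat3} (hR : R.IsSymm) (hM : M.IsSymm) :
    dcontr M (symmetrize (otimes R R)) M
      = ((M * R).trace ^ 2 + 2 * (M * R * M * R).trace) / 3 := by
  simp only [dcontr, symmetrize_otimes_self hR, Matrix.trace, Matrix.diag, Matrix.mul_apply,
    Fin.sum_univ_three]
  rw [hR.apply 0 1, hR.apply 0 2, hR.apply 1 2, hM.apply 0 1, hM.apply 0 2, hM.apply 1 2]
  ring

open scoped MatrixOrder in
theorem Matrix.PosDef.trace_mul_mul_mul_pos {n : Type*} [Fintype n] [DecidableEq n]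
    {R M : Matrix n n ℝ} (hR : R.PosDef) (hM : M.IsSymm) (hM0 : M ≠ 0) :
    0 < (M * R * M * R).trace := by
  obtain ⟨y, hy, rfl⟩ :=
    CStarAlgebra.isStrictlyPositive_iff_eq_star_mul_self.mp hR.isStrictlyPositive
  rw [star_eq_conjTranspose, conjTranspose_eq_transpose_of_trivial]
  set N := y * M * yᵀ
  have hN : (M * (yᵀ * y) * M * (yᵀ * y)).trace = (Nᴴ * N).trace := calc
    _ = (M * yᵀ * y * M * yᵀ * y).trace := by simp only [Matrix.mul_assoc]
    _ = (y * (M * yᵀ * y * M * yᵀ)).trace := trace_mul_comm _ _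
    _ = (Nᴴ * N).trace := by
      simp only [N, conjTranspose_eq_transpose_of_trivial, transpose_mul, transpose_transpose,
        hM.eq, Matrix.mul_assoc]
  have hN0 : N ≠ 0 := fun h =>
    hM0 <| hy.mul_right_eq_zero.mp <| ((isUnit_transpose y).mpr hy).mul_left_eq_zero.mp h
  rw [hN]
  exact (posSemidef_conjTranspose_mul_self N).trace_nonneg.lt_of_ne'
    (trace_conjTranspose_mul_self_eq_zero_iff.not.mpr hN0)

theorem dcontr_symmetrize_otimes_self_pos {R M : Mat3} (hR : R.PosDef) (hM : M.IsSymm)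
    (hM0 : M ≠ 0) : 0 < dcontr M (symmetrize (otimes R R)) M := by
  rw [dcontr_symmetrize_otimes_self (isHermitian_iff_isSymm.mp hR.isHermitian) hM]
  have := hR.trace_mul_mul_mul_pos hM hM0
  positivity

section Contraction

theorem dcontr_eq_sum_mul_contr (N : Mat3) (T : Tens4) (M : Mat3) :
    dcontr N T M = ∑ i, ∑ j, N i j * contr T M i j := by
  simp only [dcontr, contr, of_apply, mul_sum, mul_assoc]

theorem contr_sub (T : Tens4) (M N : Mat3) : contr T (M - N) = contr T M - contr T N := by
  ext i j
  simp only [contr, of_apply, Matrix.sub_apply, mul_sub, sum_sub_distrib]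

theorem injOn_contr_of_dcontr_pos {T : Tens4}
    (hT : ∀ M : Mat3, Mᵀ = M → M ≠ 0 → 0 < dcontr M T M) :
    Set.InjOn (contr T) {M : Mat3 | Mᵀ = M} := by
  intro M hM N hN hMN
  by_contra hne
  have hsym : (M - N)ᵀ = M - N := by rw [transpose_sub, hM, hN]
  have hzero : dcontr (M - N) T (M - N) = 0 := by
    simp [dcontr_eq_sum_mul_contr, contr_sub, hMN]
  exact (hT _ hsym (sub_ne_zero.mpr hne)).ne' hzero

variable {X : Type*} [MeasurableSpace X] {μ : Measure X}

theorem integrable_dcontr (N M : Mat3) {T : X → Tens4}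
    (hT : ∀ i j k l, Integrable (fun x => T x i j k l) μ) :
    Integrable (fun x => dcontr N (T x) M) μ := by
  unfold dcontr
  fun_prop

theorem dcontr_integral (N M : Mat3) {T : X → Tens4}
    (hT : ∀ i j k l, Integrable (fun x => T x i j k l) μ) :
    dcontr N (fun i j k l => ∫ x, T x i j k l ∂μ) M = ∫ x, dcontr N (T x) M ∂μ := by
  simp (disch := fun_prop) only [dcontr, integral_finsetSum, integral_mul_const,
    integral_const_mul]

end Contraction

theorem MeasureTheory.setIntegral_pos_of_pos {X : Type*} [MeasurableSpace X] {μ : Measure X}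
    {s : Set X} {f : X → ℝ} (hs : MeasurableSet s) (hμs : μ s ≠ 0) (hf : IntegrableOn f s μ)
    (hpos : ∀ x ∈ s, 0 < f x) : 0 < ∫ x in s, f x ∂μ := by
  rw [setIntegral_pos_iff_support_of_nonneg_ae
    ((ae_restrict_iff' hs).2 (.of_forall fun x hx => (hpos x hx).le)) hf,
    (Set.inter_eq_right.mpr fun x hx => (hpos x hx).ne' : Function.support f ∩ s = s)]
  exact pos_iff_ne_zero.mpr hμs

namespace Matrix.IsHermitian

variable {n : Type*} [Fintype n] [DecidableEq n] {B : Matrix n n ℝ} (hB : B.IsHermitian)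

theorem add_smul_one_eq_conj (s : ℝ) :
    B + s • 1 = Unitary.conjStarAlgAut ℝ _ hB.eigenvectorUnitary
      (diagonal fun k => hB.eigenvalues k + s) := by
  conv_lhs => rw [hB.spectral_theorem]
  rw [← diagonal_add, ← smul_one_eq_diagonal, map_add, map_smul, map_one]
  simp only [RCLike.ofReal_real_eq_id, CompTriple.comp_eq]

theorem inv_add_smul_one_eq_conj {s : ℝ} (hs : ∀ k, hB.eigenvalues k + s ≠ 0) :
    (B + s • 1)⁻¹ = Unitary.conjStarAlgAut ℝ _ hB.eigenvectorUnitary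
      (diagonal fun k => (hB.eigenvalues k + s)⁻¹) := by
  refine inv_eq_left_inv ?_
  rw [hB.add_smul_one_eq_conj, ← map_mul, diagonal_mul_diagonal]
  simp only [inv_mul_cancel₀ (hs _), diagonal_one, map_one]

theorem det_add_smul_one (s : ℝ) : (B + s • 1).det = ∏ k, (hB.eigenvalues k + s) := by
  rw [hB.add_smul_one_eq_conj, Unitary.conjStarAlgAut_apply, det_mul_comm, ← Matrix.mul_assoc,
    Unitary.star_mul_self_of_mem (SetLike.coe_mem _), one_mul, det_diagonal]

end Matrix.IsHermitian

theorem Unitary.conjStarAlgAut_diagonal_apply {n : Type*} [Fintype n] [DecidableEq n]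
    (U : unitary (Matrix n n ℝ)) (d : n → ℝ) (a b : n) :
    conjStarAlgAut ℝ _ U (diagonal d) a b =
      ∑ k, (U : Matrix n n ℝ) a k * d k * (U : Matrix n n ℝ) b k := by
  simp [mul_apply, diagonal]

theorem isSymm_res {B : Mat3} (hB : B.IsHermitian) (s : ℝ) : (res B s).IsSymm :=
  ((isHermitian_iff_isSymm.mp hB).add (isSymm_one.smul s)).inv

theorem measurable_res_apply (B : Mat3) (a b : Fin 3) : Measurable fun s => res B s a b := by
  have hcont : Continuous fun s : ℝ => B + s • (1 : Mat3) := by fun_prop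
  simp_rw [res, Matrix.inv_def, Ring.inverse_eq_inv', Matrix.smul_apply, smul_eq_mul]
  exact hcont.matrix_det.measurable.inv.mul (hcont.matrix_adjugate.matrix_elem a b).measurable

noncomputable def ctensDensity (B : Mat3) (s : ℝ) : Tens4 := fun i j k l =>
  symmetrize (otimes (res B s) (res B s)) i j k l / Real.sqrt (B + s • (1 : Mat3)).det

theorem measurable_ctensDensity (B : Mat3) (i j k l : Fin 3) :
    Measurable fun s => ctensDensity B s i j k l := by
  have hres := measurable_res_apply B
  have hdet : Measurable fun s : ℝ => (B + s • (1 : Mat3)).det :=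
    (continuous_const.add (continuous_id.smul continuous_const)).matrix_det.measurable
  unfold ctensDensity symmetrize otimes
  fun_prop

section Bounds

variable {B : Mat3} (hB : B.IsHermitian) {lam s : ℝ}

theorem abs_res_apply_le (hlam : 0 < lam) (hlam_le : ∀ k, lam ≤ hB.eigenvalues k) (hs : 0 ≤ s)
    (a b : Fin 3) : |res B s a b| ≤ 3 / (s + lam) := by
  have hpos (k : Fin 3) : 0 < hB.eigenvalues k + s := by linarith [hlam_le k]
  have hU (a k : Fin 3) : |(hB.eigenvectorUnitary : Mat3) a k| ≤ 1 :=
    entry_norm_bound_of_unitary hB.eigenvectorUnitary.2 a k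
  rw [res, hB.inv_add_smul_one_eq_conj fun k => (hpos k).ne',
    Unitary.conjStarAlgAut_diagonal_apply]
  calc _ ≤ ∑ k, |(hB.eigenvectorUnitary : Mat3) a k * (hB.eigenvalues k + s)⁻¹ *
          (hB.eigenvectorUnitary : Mat3) b k| := abs_sum_le_sum_abs _ _
    _ ≤ ∑ _k : Fin 3, 1 * (s + lam)⁻¹ * 1 := by
      refine sum_le_sum fun k _ => ?_
      rw [abs_mul, abs_mul, abs_inv, abs_of_pos (hpos k)]
      have hinv : (hB.eigenvalues k + s)⁻¹ ≤ (s + lam)⁻¹ :=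
        inv_anti₀ (by positivity) (by linarith [hlam_le k])
      exact mul_le_mul (mul_le_mul (hU a k) hinv (inv_pos.mpr (hpos k)).le zero_le_one) (hU b k)
        (abs_nonneg _) (by positivity)
    _ = 3 / (s + lam) := by simp [div_eq_mul_inv]

theorem sqrt_pow_three_le_sqrt_det (hlam : 0 < lam) (hlam_le : ∀ k, lam ≤ hB.eigenvalues k)
    (hs : 0 ≤ s) : √(lam ^ 3) ≤ √(B + s • (1 : Mat3)).det := by
  rw [hB.det_add_smul_one]
  gcongr
  calc lam ^ 3 = ∏ _k : Fin 3, lam := by simp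
    _ ≤ _ := prod_le_prod (fun _ _ => hlam.le) fun k _ => by linarith [hlam_le k]

theorem abs_ctensDensity_le (hlam : 0 < lam) (hlam_le : ∀ k, lam ≤ hB.eigenvalues k)
    (hs : 0 ≤ s) (i j k l : Fin 3) :
    |ctensDensity B s i j k l| ≤ 9 / √(lam ^ 3) * (s + lam) ^ (-2 : ℝ) := by
  have hsymm := abs_symmetrize_otimes_self_le (isSymm_res hB s)
    (abs_res_apply_le hB hlam hlam_le hs) i j k l
  rw [ctensDensity, abs_div, abs_of_nonneg (Real.sqrt_nonneg _)]
  calc _ ≤ (3 / (s + lam)) ^ 2 / √(lam ^ 3) :=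
        div_le_div₀ (by positivity) hsymm (by positivity)
          (sqrt_pow_three_le_sqrt_det hB hlam hlam_le hs)
    _ = 9 / √(lam ^ 3) * (s + lam) ^ (-2 : ℝ) := by
      rw [Real.rpow_neg (by positivity), Real.rpow_two]
      field_simp
      ring

end Bounds

theorem integrableOn_ctensDensity {B : Mat3} (hB : B.PosDef) (i j k l : Fin 3) :
    IntegrableOn (fun s => ctensDensity B s i j k l) (Set.Ioi 0) := by
  obtain ⟨k₀, hk₀⟩ := Finite.exists_min hB.isHermitian.eigenvalues
  have hlam := hB.eigenvalues_pos k₀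
  refine Integrable.mono' ((integrableOn_add_rpow_Ioi_of_lt (by norm_num : (-2 : ℝ) < -1)
    (neg_lt_zero.mpr hlam)).const_mul (9 / √(hB.isHermitian.eigenvalues k₀ ^ 3)))
    (measurable_ctensDensity B i j k l).aestronglyMeasurable ?_
  refine (ae_restrict_iff' measurableSet_Ioi).2 (.of_forall fun s hs => ?_)
  rw [Real.norm_eq_abs]
  exact abs_ctensDensity_le hB.isHermitian hlam hk₀ (le_of_lt hs) i j k l

theorem dcontr_ctensDensity_pos {B M : Mat3} (hB : B.PosDef) {s : ℝ} (hs : 0 ≤ s)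
    (hM : M.IsSymm) (hM0 : M ≠ 0) : 0 < dcontr M (ctensDensity B s) M := by
  have hBs : (B + s • (1 : Mat3)).PosDef := hB.add_posSemidef (PosSemidef.one.smul hs)
  have hdensity : dcontr M (ctensDensity B s) M =
      dcontr M (symmetrize (otimes (res B s) (res B s))) M / √(B + s • (1 : Mat3)).det := by
    simp only [dcontr, ctensDensity, sum_div, mul_div_assoc', div_mul_eq_mul_div]
  rw [hdensity]
  exact div_pos (dcontr_symmetrize_otimes_self_pos hBs.inv hM hM0) (Real.sqrt_pos.mpr hBs.det_pos)

theorem dcontr_Ctens {B : Mat3} (hB : B.PosDef) (M : Mat3) :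
    dcontr M (Ctens B) M = 3 / 4 * ∫ s in Set.Ioi 0, dcontr M (ctensDensity B s) M := by
  rw [← dcontr_integral M M (integrableOn_ctensDensity hB)]
  simp only [dcontr, Ctens, ctensDensity, mul_sum]
  refine sum_congr rfl fun i _ => sum_congr rfl fun j _ => sum_congr rfl fun k _ =>
    sum_congr rfl fun l _ => by ring

theorem Ctens_posDef_and_injective (B : Mat3) (hB : B.PosDef) :
    (∀ M : Mat3, Mᵀ = M → M ≠ 0 → 0 < dcontr M (Ctens B) M)
      ∧ Set.InjOn (fun M => contr (Ctens B) M) {M : Mat3 | Mᵀ = M} := by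
  have hpos (M : Mat3) (hM : Mᵀ = M) (hM0 : M ≠ 0) : 0 < dcontr M (Ctens B) M := by
    rw [dcontr_Ctens hB]
    refine mul_pos (by norm_num) (setIntegral_pos_of_pos measurableSet_Ioi (by simp)
      (integrable_dcontr M M (integrableOn_ctensDensity hB)) fun s hs => ?_)
    exact dcontr_ctensDensity_pos hB (le_of_lt hs) hM hM0
  exact ⟨hpos, injOn_contr_of_dcontr_pos hpos⟩
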